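/- arXiv:2502.15504 — 4 statements merged into one kernel-verified Lean document; each statement's English description precedes it below -/
import Mathlib

section
/- For the Jeffrey posterior θ_{t+1} of θ_t, one has ΔQ(θ_{t+1}) := Q(θ_{t+1}|θ_t) − Q(θ_t|θ_t) ≥ 0, with ΔQ(θ_{t+1}) = D_KL(θ_{t+1} || θ_t) ≥ 0. -/
open Finset Real

theorem deltaQ_jeffrey_nonneg
    {X Y : Type} [Fintype X] [Fintype Y]
    (C : X → Y → ℝ) (hC : ∀ x y, 0 ≤ C x y) (hCrow : ∀ x, ∑ y, C x y = 1)
    (τ : Y → ℝ) (hτ : ∀ y, 0 ≤ τ y) (hτ1 : ∑ y, τ y = 1)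
    (θt : X → ℝ) (hθt : ∀ x, 0 ≤ θt x) (hθt1 : ∑ x, θt x = 1)
    (hpost : ∀ y, 0 < τ y → 0 < ∑ x, θt x * C x y)
    (θt1 : X → ℝ)
    (hθt1def : ∀ x, θt1 x = ∑ y, τ y * (θt x * C x y / (∑ x', θt x' * C x' y))) :
    ((∑ x, ∑ y, τ y * (θt x * C x y / (∑ x', θt x' * C x' y))
        * Real.log (θt1 x * C x y))
      - (∑ x, ∑ y, τ y * (θt x * C x y / (∑ x', θt x' * C x' y))
        * Real.log (θt x * C x y))
      = ∑ x, θt1 x * Real.log (θt1 x / θt x))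
    ∧ 0 ≤ ∑ x, θt1 x * Real.log (θt1 x / θt x) := by
  set p : Y → ℝ := fun y => ∑ x', θt x' * C x' y with hp
  set f : X → Y → ℝ := fun x y => τ y * (θt x * C x y / p y) with hf
  have hpnn : ∀ y, 0 ≤ p y := fun y =>
    Finset.sum_nonneg fun x _ => mul_nonneg (hθt x) (hC x y)
  have hfnn : ∀ x y, 0 ≤ f x y := fun x y =>
    mul_nonneg (hτ y) (div_nonneg (mul_nonneg (hθt x) (hC x y)) (hpnn y))
  have hθt1nn : ∀ x, 0 ≤ θt1 x := fun x => by
    rw [hθt1def]; exact Finset.sum_nonneg fun y _ => hfnn x y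
  have hsupp : ∀ x, θt x = 0 → θt1 x = 0 := by
    intro x hx
    rw [hθt1def]
    refine Finset.sum_eq_zero fun y _ => by simp [hx]
  -- sum θt1 = 1
  have hsum1 : ∑ x, θt1 x = 1 := by
    have : ∑ x, θt1 x = ∑ y, τ y * (p y / p y) := by
      simp only [hθt1def]
      rw [Finset.sum_comm]
      refine Finset.sum_congr rfl fun y _ => ?_
      rw [← Finset.mul_sum, ← Finset.sum_div]
    rw [this, ← hτ1]
    refine Finset.sum_congr rfl fun y _ => ?_
    rcases eq_or_lt_of_le (hτ y) with h | h
    · simp [← h]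
    · rw [div_self (ne_of_gt (hpost y h)), mul_one]
  -- per-x key equality
  have key : ∀ x, ∑ y, f x y * (Real.log (θt1 x * C x y) - Real.log (θt x * C x y))
      = θt1 x * Real.log (θt1 x / θt x) := by
    intro x
    rcases eq_or_lt_of_le (hθt1nn x) with h0 | h0
    · -- θt1 x = 0, so all f x y = 0
      have hall : ∀ y ∈ Finset.univ, f x y = 0 := by
        intro y hy
        have := (Finset.sum_eq_zero_iff_of_nonneg (fun y _ => hfnn x y)).mp
          (by rw [← hθt1def x, ← h0]) y hy
        exact this
      rw [← h0]
      simp only [zero_mul]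
      exact Finset.sum_eq_zero fun y hy => by rw [hall y hy, zero_mul]
    · have hθtx : 0 < θt x := by
        rcases eq_or_lt_of_le (hθt x) with h | h
        · exact absurd (hsupp x h.symm) (ne_of_gt h0)
        · exact h
      have : ∀ y, f x y * (Real.log (θt1 x * C x y) - Real.log (θt x * C x y))
          = f x y * Real.log (θt1 x / θt x) := by
        intro y
        rcases eq_or_ne (f x y) 0 with hfz | hfz
        · rw [hfz, zero_mul, zero_mul]
        · have hCxy : C x y ≠ 0 := by
            intro hc
            apply hfz
            simp [hf, hc]
          congr 1
          rw [Real.log_mul (ne_of_gt h0) hCxy, Real.log_mul (ne_of_gt hθtx) hCxy,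
            Real.log_div (ne_of_gt h0) (ne_of_gt hθtx)]
          ring
      rw [Finset.sum_congr rfl fun y _ => this y, ← Finset.sum_mul, ← hθt1def x]
  have heq : (∑ x, ∑ y, f x y * Real.log (θt1 x * C x y))
      - (∑ x, ∑ y, f x y * Real.log (θt x * C x y))
      = ∑ x, θt1 x * Real.log (θt1 x / θt x) := by
    rw [← Finset.sum_sub_distrib]
    refine Finset.sum_congr rfl fun x _ => ?_
    rw [← Finset.sum_sub_distrib]
    rw [← key x]
    exact Finset.sum_congr rfl fun y _ => by ring
  refine ⟨heq, ?_⟩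
  have hbound : ∀ x, θt1 x - θt x ≤ θt1 x * Real.log (θt1 x / θt x) := by
    intro x
    rcases eq_or_lt_of_le (hθt1nn x) with h0 | h0
    · rw [← h0]
      simp [hθt x]
    · have hθtx : 0 < θt x := by
        rcases eq_or_lt_of_le (hθt x) with h | h
        · exact absurd (hsupp x h.symm) (ne_of_gt h0)
        · exact h
      have hlog : Real.log (θt x / θt1 x) ≤ θt x / θt1 x - 1 :=
        Real.log_le_sub_one_of_pos (div_pos hθtx h0)
      have hrw : Real.log (θt1 x / θt x) = -Real.log (θt x / θt1 x) := by
        rw [← Real.log_inv, inv_div]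
      have : 1 - θt x / θt1 x ≤ Real.log (θt1 x / θt x) := by
        rw [hrw]; linarith [hlog]
      calc θt1 x - θt x = θt1 x * (1 - θt x / θt1 x) := by
            field_simp
          _ ≤ θt1 x * Real.log (θt1 x / θt x) :=
            mul_le_mul_of_nonneg_left this (le_of_lt h0)
  calc (0:ℝ) = ∑ x, (θt1 x - θt x) := by
        rw [Finset.sum_sub_distrib, hsum1, hθt1]; ring
    _ ≤ ∑ x, θt1 x * Real.log (θt1 x / θt x) :=
        Finset.sum_le_sum fun x _ => hbound x
end

section
/- (Main theorem, Jacobs) Jeffrey's update rule does not increase the relative entropy between the observed distribution and the prediction: if θ_{t+1}(x) = Σ_y τ(y) θ_t(x)C(y|x)/p_{θ_t}(y) is the Jeffrey posterior of θ_t, then D_KL(τ || p_{θ_{t+1}}) ≤ D_KL(τ || p_{θ_t}). -/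
/-!
The Jeffrey update `θ'` is the `τ`-mixture of the Bayesian posteriors `θ(x) C(y|x) / p_θ(y)`.
For each `y`, Jensen's inequality for `log` with the posterior as weights gives
`∑ₓ post_y(x) log (θ'(x)/θ(x)) ≤ log (p_{θ'}(y)/p_θ(y))`; averaging over `τ`, the left-hand
sides add up to `D_KL(θ' || θ)`, which is nonnegative by Gibbs' inequality, while the right-hand
sides add up to `D_KL(τ || p_θ) - D_KL(τ || p_{θ'})`.
-/

open Finset Real

namespace Real

theorem sub_le_mul_log_div {a b : ℝ} (ha : 0 ≤ a) (hb : 0 ≤ b) (hab : 0 < a → 0 < b) :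
    a - b ≤ a * log (a / b) := by
  rcases ha.eq_or_lt with rfl | ha
  · simpa using hb
  · have key := one_sub_inv_le_log_of_pos (div_pos ha (hab ha))
    rw [inv_div] at key
    calc a - b = a * (1 - b / a) := by field_simp
      _ ≤ a * log (a / b) := mul_le_mul_of_nonneg_left key ha.le

theorem sum_mul_log_div_nonneg {ι : Type*} {s : Finset ι} {a b : ι → ℝ}
    (ha : ∀ i ∈ s, 0 ≤ a i) (hb : ∀ i ∈ s, 0 ≤ b i) (hab : ∀ i ∈ s, 0 < a i → 0 < b i)
    (hsum : ∑ i ∈ s, b i ≤ ∑ i ∈ s, a i) :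
    0 ≤ ∑ i ∈ s, a i * log (a i / b i) :=
  calc 0 ≤ ∑ i ∈ s, (a i - b i) := by rw [sum_sub_distrib]; linarith
    _ ≤ ∑ i ∈ s, a i * log (a i / b i) :=
      sum_le_sum fun i hi => sub_le_mul_log_div (ha i hi) (hb i hi) (hab i hi)

theorem sum_mul_log_le_log_sum_mul {ι : Type*} {s : Finset ι} {w v : ι → ℝ}
    (hw : ∀ i ∈ s, 0 ≤ w i) (hw1 : ∑ i ∈ s, w i = 1) (hv : ∀ i ∈ s, 0 < w i → 0 < v i) :
    ∑ i ∈ s, w i * log (v i) ≤ log (∑ i ∈ s, w i * v i) := by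
  -- `log` is concave only on `(0, ∞)`, so Jensen is applied on the support of `w`.
  have on_support : ∀ {f : ι → ℝ}, (∀ i, w i = 0 → f i = 0) →
      ∑ i ∈ s with 0 < w i, f i = ∑ i ∈ s, f i := fun hf =>
    sum_filter_of_ne fun i hi hfi => (hw i hi).lt_of_ne' fun h => hfi (hf i h)
  have jensen := strictConcaveOn_log_Ioi.concaveOn.le_map_sum (t := {i ∈ s | 0 < w i})
    (fun i hi => hw i (mem_filter.1 hi).1) (by rwa [on_support fun i h => h])
    (fun i hi => hv i (mem_filter.1 hi).1 (mem_filter.1 hi).2)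
  simp only [smul_eq_mul] at jensen
  rwa [on_support (f := fun i => w i * log (v i)) fun i h => by simp [h],
    on_support (f := fun i => w i * v i) fun i h => by simp [h]] at jensen

end Real

section Jeffrey

variable {X Y : Type*} [Fintype X]

def predicted (C : X → Y → ℝ) (θ : X → ℝ) (y : Y) : ℝ := ∑ x, θ x * C x y

noncomputable def posterior (C : X → Y → ℝ) (θ : X → ℝ) (y : Y) (x : X) : ℝ :=
  θ x * C x y / predicted C θ y

variable {C : X → Y → ℝ} {θ : X → ℝ}

theorem predicted_nonneg (hC : ∀ x y, 0 ≤ C x y) (hθ : ∀ x, 0 ≤ θ x) (y : Y) :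
    0 ≤ predicted C θ y :=
  sum_nonneg fun x _ => mul_nonneg (hθ x) (hC x y)

theorem posterior_nonneg (hC : ∀ x y, 0 ≤ C x y) (hθ : ∀ x, 0 ≤ θ x) (y : Y) (x : X) :
    0 ≤ posterior C θ y x :=
  div_nonneg (mul_nonneg (hθ x) (hC x y)) (predicted_nonneg hC hθ y)

theorem sum_posterior {y : Y} (hy : predicted C θ y ≠ 0) : ∑ x, posterior C θ y x = 1 := by
  simp only [posterior, ← sum_div]
  exact div_self hy

theorem sum_posterior_mul_div {θ' : X → ℝ} (hθ' : ∀ x, θ x = 0 → θ' x = 0) (y : Y) :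
    ∑ x, posterior C θ y x * (θ' x / θ x) = predicted C θ' y / predicted C θ y := by
  rw [predicted, sum_div]
  refine sum_congr rfl fun x _ => ?_
  by_cases hx : θ x = 0
  · simp [posterior, hx, hθ' x hx]
  · simp only [posterior]
    field_simp

theorem sum_posterior_mul_log_div_le (hC : ∀ x y, 0 ≤ C x y) (hθ : ∀ x, 0 ≤ θ x) {θ' : X → ℝ}
    (hθ' : ∀ x, θ x = 0 → θ' x = 0) {y : Y} (hy : 0 < predicted C θ y)
    (hθ'pos : ∀ x, 0 < posterior C θ y x → 0 < θ' x) :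
    ∑ x, posterior C θ y x * log (θ' x / θ x) ≤ log (predicted C θ' y / predicted C θ y) := by
  rw [← sum_posterior_mul_div hθ' y]
  refine sum_mul_log_le_log_sum_mul (fun x _ => posterior_nonneg hC hθ y x)
    (sum_posterior hy.ne') fun x _ hx => div_pos (hθ'pos x hx) ?_
  exact pos_of_mul_pos_left (div_pos_iff_of_pos_right hy |>.1 hx) (hC x y)

variable [Fintype Y]

noncomputable def relEntropy (τ p : Y → ℝ) : ℝ := ∑ y, τ y * log (τ y / p y)

theorem relEntropy_sub_relEntropy {τ p q : Y → ℝ} (hτ : ∀ y, 0 ≤ τ y)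
    (hp : ∀ y, 0 < τ y → 0 < p y) (hq : ∀ y, 0 < τ y → 0 < q y) :
    relEntropy τ p - relEntropy τ q = ∑ y, τ y * log (q y / p y) := by
  rw [relEntropy, relEntropy, ← sum_sub_distrib]
  refine sum_congr rfl fun y _ => ?_
  rcases (hτ y).eq_or_lt with h | h
  · simp [← h]
  · rw [log_div h.ne' (hp y h).ne', log_div h.ne' (hq y h).ne',
      log_div (hq y h).ne' (hp y h).ne']
    ring

noncomputable def jeffreyUpdate (C : X → Y → ℝ) (τ : Y → ℝ) (θ : X → ℝ) (x : X) : ℝ :=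
  ∑ y, τ y * posterior C θ y x

variable {τ : Y → ℝ}

theorem jeffreyUpdate_nonneg (hC : ∀ x y, 0 ≤ C x y) (hτ : ∀ y, 0 ≤ τ y) (hθ : ∀ x, 0 ≤ θ x)
    (x : X) : 0 ≤ jeffreyUpdate C τ θ x :=
  sum_nonneg fun y _ => mul_nonneg (hτ y) (posterior_nonneg hC hθ y x)

theorem jeffreyUpdate_eq_zero {x : X} (hx : θ x = 0) : jeffreyUpdate C τ θ x = 0 := by
  simp [jeffreyUpdate, posterior, hx]

theorem jeffreyUpdate_pos (hC : ∀ x y, 0 ≤ C x y) (hτ : ∀ y, 0 ≤ τ y) (hθ : ∀ x, 0 ≤ θ x)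
    {x : X} {y : Y} (hτy : 0 < τ y) (hxy : 0 < posterior C θ y x) :
    0 < jeffreyUpdate C τ θ x :=
  (mul_pos hτy hxy).trans_le <| single_le_sum (f := fun y => τ y * posterior C θ y x)
    (fun y _ => mul_nonneg (hτ y) (posterior_nonneg hC hθ y x)) (mem_univ y)

theorem sum_jeffreyUpdate (hτ : ∀ y, 0 ≤ τ y) (hτ1 : ∑ y, τ y = 1)
    (hpos : ∀ y, 0 < τ y → 0 < predicted C θ y) : ∑ x, jeffreyUpdate C τ θ x = 1 := by
  simp only [jeffreyUpdate]
  rw [sum_comm, ← hτ1]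
  refine sum_congr rfl fun y _ => ?_
  rcases (hτ y).eq_or_lt with h | h
  · simp [← h]
  · rw [← mul_sum, sum_posterior (hpos y h).ne', mul_one]

theorem sum_jeffreyUpdate_mul (f : X → ℝ) :
    ∑ x, jeffreyUpdate C τ θ x * f x = ∑ y, τ y * ∑ x, posterior C θ y x * f x := by
  simp only [jeffreyUpdate, sum_mul, mul_sum, mul_assoc]
  exact sum_comm

theorem predicted_jeffreyUpdate_pos (hC : ∀ x y, 0 ≤ C x y) (hτ : ∀ y, 0 ≤ τ y)
    (hθ : ∀ x, 0 ≤ θ x) {y : Y} (hτy : 0 < τ y) (hy : 0 < predicted C θ y) :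
    0 < predicted C (jeffreyUpdate C τ θ) y := by
  obtain ⟨x, -, hx⟩ := (sum_pos_iff_of_nonneg fun x _ => mul_nonneg (hθ x) (hC x y)).1 hy
  have hθ'x := jeffreyUpdate_pos hC hτ hθ hτy (div_pos hx hy)
  exact (sum_pos_iff_of_nonneg fun x _ => mul_nonneg (jeffreyUpdate_nonneg hC hτ hθ x) (hC x y)).2
    ⟨x, mem_univ x, mul_pos hθ'x (pos_of_mul_pos_right hx (hθ x))⟩

theorem sum_jeffreyUpdate_mul_log_div_le (hC : ∀ x y, 0 ≤ C x y) (hτ : ∀ y, 0 ≤ τ y)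
    (hθ : ∀ x, 0 ≤ θ x) (hpos : ∀ y, 0 < τ y → 0 < predicted C θ y) :
    ∑ x, jeffreyUpdate C τ θ x * log (jeffreyUpdate C τ θ x / θ x)
      ≤ ∑ y, τ y * log (predicted C (jeffreyUpdate C τ θ) y / predicted C θ y) := by
  rw [sum_jeffreyUpdate_mul]
  refine sum_le_sum fun y _ => ?_
  rcases (hτ y).eq_or_lt with h | h
  · simp [← h]
  · exact mul_le_mul_of_nonneg_left (sum_posterior_mul_log_div_le hC hθ
      (fun x => jeffreyUpdate_eq_zero) (hpos y h) fun x => jeffreyUpdate_pos hC hτ hθ h) h.le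

end Jeffrey

theorem jeffrey_update_reduces_kl_general
    {X Y : Type} [Fintype X] [Fintype Y]
    (C : X → Y → ℝ) (hC : ∀ x y, 0 ≤ C x y)
    (τ : Y → ℝ) (hτ : ∀ y, 0 ≤ τ y) (hτ1 : ∑ y, τ y = 1)
    (θt : X → ℝ) (hθt : ∀ x, 0 ≤ θt x) (hθt1 : ∑ x, θt x = 1)
    (hpos : ∀ y, 0 < τ y → 0 < ∑ x, θt x * C x y)
    (θt1 : X → ℝ)
    (hθt1def : ∀ x, θt1 x = ∑ y, τ y * (θt x * C x y / (∑ x', θt x' * C x' y))) :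
    (∑ y, τ y * Real.log (τ y / (∑ x, θt1 x * C x y)))
    ≤ (∑ y, τ y * Real.log (τ y / (∑ x, θt x * C x y))) := by
  obtain rfl : θt1 = jeffreyUpdate C τ θt := funext hθt1def
  change relEntropy τ (predicted C _) ≤ relEntropy τ (predicted C θt)
  have gibbs : 0 ≤ ∑ x, jeffreyUpdate C τ θt x * log (jeffreyUpdate C τ θt x / θt x) :=
    sum_mul_log_div_nonneg (fun x _ => jeffreyUpdate_nonneg hC hτ hθt x) (fun x _ => hθt x)
      (fun x _ hx => (hθt x).lt_of_ne' fun h => hx.ne' (jeffreyUpdate_eq_zero h))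
      (by rw [hθt1, sum_jeffreyUpdate hτ hτ1 hpos])
  rw [← sub_nonneg, relEntropy_sub_relEntropy (p := predicted C θt) hτ hpos
    fun y hy => predicted_jeffreyUpdate_pos hC hτ hθt hy (hpos y hy)]
  exact gibbs.trans (sum_jeffreyUpdate_mul_log_div_le hC hτ hθt hpos)

theorem jeffrey_update_reduces_kl
    {X Y : Type} [Fintype X] [Fintype Y]
    (C : X → Y → ℝ) (hC : ∀ x y, 0 ≤ C x y) (hCrow : ∀ x, ∑ y, C x y = 1)
    (τ : Y → ℝ) (hτ : ∀ y, 0 ≤ τ y) (hτ1 : ∑ y, τ y = 1)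
    (θt : X → ℝ) (hθt : ∀ x, 0 ≤ θt x) (hθt1 : ∑ x, θt x = 1)
    (hpos : ∀ y, 0 < τ y → 0 < ∑ x, θt x * C x y)
    (θt1 : X → ℝ)
    (hθt1def : ∀ x, θt1 x = ∑ y, τ y * (θt x * C x y / (∑ x', θt x' * C x' y))) :
    (∑ y, τ y * Real.log (τ y / (∑ x, θt1 x * C x y)))
    ≤ (∑ y, τ y * Real.log (τ y / (∑ x, θt x * C x y))) :=
  jeffrey_update_reduces_kl_general C hC τ hτ hτ1 θt hθt hθt1 hpos θt1 hθt1def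
end

section
/- (EM monotonicity) Jeffrey's update does not decrease the scaled log-likelihood: L(θ_{t+1}) ≥ L(θ_t), where L(θ) = Σ_y τ(y) log p_θ(y) and θ_{t+1} is the Jeffrey posterior of θ_t. -/
open Finset Real

theorem jeffrey_update_increases_loglikelihood
    {X Y : Type} [Fintype X] [Fintype Y]
    (C : X → Y → ℝ) (hC : ∀ x y, 0 ≤ C x y) (hCrow : ∀ x, ∑ y, C x y = 1)
    (τ : Y → ℝ) (hτ : ∀ y, 0 ≤ τ y) (hτ1 : ∑ y, τ y = 1)
    (θt : X → ℝ) (hθt : ∀ x, 0 ≤ θt x) (hθt1 : ∑ x, θt x = 1)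
    (hpos : ∀ y, 0 < τ y → 0 < ∑ x, θt x * C x y)
    (θt1 : X → ℝ)
    (hθt1def : ∀ x, θt1 x = ∑ y, τ y * (θt x * C x y / (∑ x', θt x' * C x' y))) :
    (∑ y, τ y * Real.log (∑ x, θt x * C x y))
    ≤ (∑ y, τ y * Real.log (∑ x, θt1 x * C x y)) := by
  classical
  set pt : Y → ℝ := fun y => ∑ x, θt x * C x y with hptdef
  have hptnn : ∀ y, 0 ≤ pt y := fun y => Finset.sum_nonneg fun x _ => mul_nonneg (hθt x) (hC x y)
  have hθ1nn : ∀ x, 0 ≤ θt1 x := by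
    intro x; rw [hθt1def]
    exact Finset.sum_nonneg fun y _ =>
      mul_nonneg (hτ y) (div_nonneg (mul_nonneg (hθt x) (hC x y)) (hptnn y))
  have hzero : ∀ x, θt x = 0 → θt1 x = 0 := by
    intro x hx; rw [hθt1def]; simp [hx]
  have hθ1sum : ∑ x, θt1 x = 1 := by
    have h1 : ∑ x, θt1 x = ∑ y, τ y * (pt y / pt y) := by
      simp_rw [hθt1def]
      rw [Finset.sum_comm]
      refine Finset.sum_congr rfl fun y _ => ?_
      rw [← Finset.mul_sum, ← Finset.sum_div]
    rw [h1, ← hτ1]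
    refine Finset.sum_congr rfl fun y _ => ?_
    rcases (hτ y).lt_or_eq with h | h
    · rw [div_self (hpos y h).ne', mul_one]
    · simp [← h]
  -- Gibbs inequality
  have gibbs : 0 ≤ ∑ x, θt1 x * (Real.log (θt1 x) - Real.log (θt x)) := by
    have hterm : ∀ x, θt1 x * (Real.log (θt x) - Real.log (θt1 x)) ≤ θt x - θt1 x := by
      intro x
      rcases (hθ1nn x).lt_or_eq with h1 | h1
      · have ht : 0 < θt x := by
          rcases (hθt x).lt_or_eq with h | h
          · exact h
          · exact absurd (hzero x h.symm) (by linarith)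
        have hld : Real.log (θt x) - Real.log (θt1 x) = Real.log (θt x / θt1 x) :=
          (Real.log_div ht.ne' h1.ne').symm
        rw [hld]
        have hlog := Real.log_le_sub_one_of_pos (div_pos ht h1)
        calc θt1 x * Real.log (θt x / θt1 x) ≤ θt1 x * (θt x / θt1 x - 1) :=
              mul_le_mul_of_nonneg_left hlog (hθ1nn x)
          _ = θt x - θt1 x := by field_simp
      · rw [← h1]; simp [hθt x]
    have hsum := Finset.sum_le_sum (fun x (_ : x ∈ Finset.univ) => hterm x)
    rw [Finset.sum_sub_distrib, hθt1, hθ1sum] at hsum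
    have hneg : ∑ x, θt1 x * (Real.log (θt1 x) - Real.log (θt x))
        = -∑ x, θt1 x * (Real.log (θt x) - Real.log (θt1 x)) := by
      rw [← Finset.sum_neg_distrib]
      exact Finset.sum_congr rfl fun x _ => by ring
    rw [hneg]; linarith
  -- key per-y inequality via Jensen
  have key : ∀ y, 0 < τ y →
      ∑ x, (θt x * C x y / pt y) * (Real.log (θt1 x) - Real.log (θt x))
        ≤ Real.log (∑ x, θt1 x * C x y) - Real.log (pt y) := by
    intro y hy
    have hpy : 0 < pt y := hpos y hy
    set S : Finset X := Finset.univ.filter (fun x => 0 < θt x * C x y) with hS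
    have hmem : ∀ x ∈ S, 0 < θt x ∧ 0 < C x y ∧ 0 < θt1 x := by
      intro x hx
      rw [hS, Finset.mem_filter] at hx
      have hx' := hx.2
      have ht : 0 < θt x := by
        rcases (hθt x).lt_or_eq with h | h
        · exact h
        · exfalso; rw [← h, zero_mul] at hx'; exact lt_irrefl 0 hx'
      have hc : 0 < C x y := by
        rcases (hC x y).lt_or_eq with h | h
        · exact h
        · exfalso; rw [← h, mul_zero] at hx'; exact lt_irrefl 0 hx'
      refine ⟨ht, hc, ?_⟩
      rw [hθt1def]
      refine Finset.sum_pos'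
        (fun y' _ => mul_nonneg (hτ y') (div_nonneg (mul_nonneg (hθt x) (hC x y')) (hptnn y')))
        ⟨y, Finset.mem_univ y, mul_pos hy (div_pos hx' hpy)⟩
    have hoff : ∀ x ∈ (Finset.univ : Finset X), x ∉ S → θt x * C x y = 0 := by
      intro x _ hx
      rw [hS, Finset.mem_filter] at hx
      push_neg at hx
      have h2 := hx (Finset.mem_univ x)
      linarith [mul_nonneg (hθt x) (hC x y)]
    have hwsum : ∑ x ∈ S, θt x * C x y / pt y = 1 := by
      rw [Finset.sum_subset (Finset.subset_univ S)
        (fun x hx hxs => by rw [hoff x hx hxs, zero_div])]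
      rw [← Finset.sum_div, div_self hpy.ne']
    have hconc : ConcaveOn ℝ (Set.Ioi 0) Real.log := strictConcaveOn_log_Ioi.concaveOn
    have jensen := hconc.le_map_sum (t := S) (w := fun x => θt x * C x y / pt y)
        (p := fun x => θt1 x / θt x)
        (fun x _ => div_nonneg (mul_nonneg (hθt x) (hC x y)) hpy.le) hwsum
        (fun x hx => Set.mem_Ioi.mpr (div_pos (hmem x hx).2.2 (hmem x hx).1))
    simp only [smul_eq_mul] at jensen
    have hinner : ∑ x ∈ S, (θt x * C x y / pt y) * (θt1 x / θt x)
        = (∑ x ∈ S, θt1 x * C x y) / pt y := by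
      rw [Finset.sum_div]
      refine Finset.sum_congr rfl fun x hx => ?_
      have ht := (hmem x hx).1
      field_simp
    obtain ⟨x0, hx0⟩ : ∃ x, 0 < θt x * C x y := by
      by_contra hc
      push_neg at hc
      have : pt y ≤ 0 := Finset.sum_nonpos fun x _ => hc x
      linarith
    have hx0S : x0 ∈ S := by rw [hS, Finset.mem_filter]; exact ⟨Finset.mem_univ x0, hx0⟩
    have hsumpos : 0 < ∑ x ∈ S, θt1 x * C x y :=
      Finset.sum_pos' (fun x _ => mul_nonneg (hθ1nn x) (hC x y))
        ⟨x0, hx0S, mul_pos (hmem x0 hx0S).2.2 (hmem x0 hx0S).2.1⟩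
    have hle : (∑ x ∈ S, θt1 x * C x y) ≤ ∑ x, θt1 x * C x y :=
      Finset.sum_le_sum_of_subset_of_nonneg (Finset.subset_univ S)
        (fun x _ _ => mul_nonneg (hθ1nn x) (hC x y))
    have hfullpos : 0 < ∑ x, θt1 x * C x y := lt_of_lt_of_le hsumpos hle
    calc ∑ x, (θt x * C x y / pt y) * (Real.log (θt1 x) - Real.log (θt x))
        = ∑ x ∈ S, (θt x * C x y / pt y) * (Real.log (θt1 x) - Real.log (θt x)) :=
          (Finset.sum_subset (Finset.subset_univ S)
            (fun x hx hxs => by rw [hoff x hx hxs, zero_div, zero_mul])).symm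
      _ = ∑ x ∈ S, (θt x * C x y / pt y) * Real.log (θt1 x / θt x) :=
          Finset.sum_congr rfl fun x hx => by
            rw [Real.log_div (hmem x hx).2.2.ne' (hmem x hx).1.ne']
      _ ≤ Real.log (∑ x ∈ S, (θt x * C x y / pt y) * (θt1 x / θt x)) := jensen
      _ = Real.log ((∑ x ∈ S, θt1 x * C x y) / pt y) := by rw [hinner]
      _ ≤ Real.log ((∑ x, θt1 x * C x y) / pt y) := by
          apply Real.log_le_log (div_pos hsumpos hpy)
          gcongr
      _ = Real.log (∑ x, θt1 x * C x y) - Real.log (pt y) :=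
          Real.log_div hfullpos.ne' hpy.ne'
  -- assemble
  have step1 : ∑ y, τ y * (∑ x, (θt x * C x y / pt y) * (Real.log (θt1 x) - Real.log (θt x)))
      ≤ ∑ y, τ y * (Real.log (∑ x, θt1 x * C x y) - Real.log (pt y)) := by
    refine Finset.sum_le_sum fun y _ => ?_
    rcases (hτ y).lt_or_eq with h | h
    · exact mul_le_mul_of_nonneg_left (key y h) (hτ y)
    · simp [← h]
  have step2 : ∑ y, τ y * (∑ x, (θt x * C x y / pt y) * (Real.log (θt1 x) - Real.log (θt x)))
      = ∑ x, θt1 x * (Real.log (θt1 x) - Real.log (θt x)) := by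
    simp_rw [Finset.mul_sum]
    rw [Finset.sum_comm]
    refine Finset.sum_congr rfl fun x _ => ?_
    rw [hθt1def, Finset.sum_mul]
    exact Finset.sum_congr rfl fun y _ => by ring
  have step3 : ∑ y, τ y * (Real.log (∑ x, θt1 x * C x y) - Real.log (pt y))
      = (∑ y, τ y * Real.log (∑ x, θt1 x * C x y)) - ∑ y, τ y * Real.log (pt y) := by
    rw [← Finset.sum_sub_distrib]
    exact Finset.sum_congr rfl fun y _ => by ring
  rw [step2, step3] at step1
  linarith
end

section
/- (Monotone sequence) Let θ_0 be a distribution on X such that for every t the iterate θ_{t+1} = Jeffrey posterior of θ_t is well defined (p_{θ_t}(y) > 0 whenever τ(y) > 0). Then the sequence t ↦ D_KL(τ || p_{θ_t}) is nonincreasing, and hence convergent if it is finite at t = 0. -/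
open Finset Real Filter

private lemma log_div_ge' {a b : ℝ} (ha : 0 < a) (hb : 0 < b) :
    1 - b / a ≤ Real.log (a / b) := by
  have h := Real.log_le_sub_one_of_pos (x := b / a) (by positivity)
  have h2 : Real.log (b / a) = - Real.log (a / b) := by
    rw [← Real.log_inv]
    congr 1
    field_simp
  rw [h2] at h
  linarith

private lemma jeffrey_sum_one {X Y : Type} [Fintype X] [Fintype Y]
    (C : X → Y → ℝ)
    (τ : Y → ℝ) (hτ : ∀ y, 0 ≤ τ y) (hτ1 : ∑ y, τ y = 1)
    (f g : X → ℝ)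
    (hrec : ∀ x, g x = ∑ y, τ y * (f x * C x y / (∑ x', f x' * C x' y)))
    (hp : ∀ y, 0 < τ y → 0 < ∑ x, f x * C x y) :
    ∑ x, g x = 1 := by
  calc ∑ x, g x = ∑ x, ∑ y, τ y * (f x * C x y / (∑ x', f x' * C x' y)) := by
        simp only [hrec]
    _ = ∑ y, ∑ x, τ y * (f x * C x y / (∑ x', f x' * C x' y)) := Finset.sum_comm
    _ = ∑ y, τ y * ((∑ x, f x * C x y) / (∑ x', f x' * C x' y)) := by
        refine Finset.sum_congr rfl fun y _ => ?_
        rw [← Finset.mul_sum, ← Finset.sum_div]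
    _ = ∑ y, τ y := by
        refine Finset.sum_congr rfl fun y _ => ?_
        rcases (hτ y).eq_or_lt with h | h
        · simp [← h]
        · rw [div_self (hp y h).ne', mul_one]
    _ = 1 := hτ1

private lemma jeffrey_step {X Y : Type} [Fintype X] [Fintype Y]
    (C : X → Y → ℝ) (hC : ∀ x y, 0 ≤ C x y)
    (τ : Y → ℝ) (hτ : ∀ y, 0 ≤ τ y) (hτ1 : ∑ y, τ y = 1)
    (f g : X → ℝ) (hf : ∀ x, 0 ≤ f x) (hf1 : ∑ x, f x = 1)
    (hrec : ∀ x, g x = ∑ y, τ y * (f x * C x y / (∑ x', f x' * C x' y)))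
    (hp : ∀ y, 0 < τ y → 0 < ∑ x, f x * C x y)
    (hq : ∀ y, 0 < τ y → 0 < ∑ x, g x * C x y) :
    ∑ y, τ y * Real.log (τ y / (∑ x, g x * C x y))
      ≤ ∑ y, τ y * Real.log (τ y / (∑ x, f x * C x y)) := by
  set P : Y → ℝ := fun y => ∑ x, f x * C x y with hP
  set Q : Y → ℝ := fun y => ∑ x, g x * C x y with hQ
  -- g is nonnegative
  have hg0 : ∀ x, 0 ≤ g x := by
    intro x
    rw [hrec]
    refine Finset.sum_nonneg fun y _ => mul_nonneg (hτ y) (div_nonneg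
      (mul_nonneg (hf x) (hC x y)) (Finset.sum_nonneg fun x' _ =>
        mul_nonneg (hf x') (hC x' y)))
  set S : Finset X := Finset.univ.filter (fun x => 0 < g x) with hS
  have hmemS : ∀ x, x ∈ S ↔ 0 < g x := by
    intro x; simp [hS]
  have hgz : ∀ x, x ∉ S → g x = 0 := by
    intro x hx
    rw [hmemS] at hx
    exact le_antisymm (not_lt.mp hx) (hg0 x)
  have hfpos : ∀ x ∈ S, 0 < f x := by
    intro x hx
    rcases (hf x).eq_or_lt with h | h
    · exfalso
      rw [hmemS] at hx
      have : g x = 0 := by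
        rw [hrec]
        refine Finset.sum_eq_zero fun y _ => ?_
        rw [← h]
        simp
      linarith
    · exact h
  -- outside S, f x * C x y = 0 for y in the support of τ
  have hD : ∀ y, 0 < τ y → ∀ x, x ∉ S → f x * C x y = 0 := by
    intro y hy x hx
    have hgx : g x = 0 := hgz x hx
    rw [hrec] at hgx
    have hterm := (Finset.sum_eq_zero_iff_of_nonneg (fun y' _ =>
      mul_nonneg (hτ y') (div_nonneg (mul_nonneg (hf x) (hC x y'))
        (Finset.sum_nonneg fun x' _ => mul_nonneg (hf x') (hC x' y'))))).mp hgx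
      y (Finset.mem_univ y)
    have h2 : f x * C x y / P y = 0 := by
      rcases mul_eq_zero.mp hterm with h | h
      · exact absurd h hy.ne'
      · exact h
    rcases div_eq_zero_iff.mp h2 with h | h
    · exact h
    · exact absurd h (hp y hy).ne'
  have hE : ∀ y, 0 < τ y → ∑ x ∈ S, f x * C x y = P y := by
    intro y hy
    exact Finset.sum_subset (Finset.subset_univ S)
      (fun x _ hx => hD y hy x hx)
  have hF : ∀ y, ∑ x ∈ S, g x * C x y = Q y := by
    intro y
    exact Finset.sum_subset (Finset.subset_univ S)
      (fun x _ hx => by rw [hgz x hx, zero_mul])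
  have hgsum : ∑ x, g x = 1 := jeffrey_sum_one C τ hτ hτ1 f g hrec hp
  have hG : ∑ x ∈ S, g x = 1 := by
    rw [Finset.sum_subset (Finset.subset_univ S) (fun x _ hx => hgz x hx)]
    exact hgsum
  -- per-y Jensen inequality
  have hH : ∀ y, 0 < τ y →
      ∑ x ∈ S, (f x * C x y / P y) * Real.log (g x / f x)
        ≤ Real.log (Q y) - Real.log (P y) := by
    intro y hy
    have hPy : 0 < P y := hp y hy
    have hQy : 0 < Q y := hq y hy
    set A : ℝ := Q y / P y with hA
    have hApos : 0 < A := div_pos hQy hPy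
    have hw1 : ∑ x ∈ S, f x * C x y / P y = 1 := by
      rw [← Finset.sum_div, hE y hy, div_self hPy.ne']
    have hwr : ∑ x ∈ S, (f x * C x y / P y) * (g x / f x) = A := by
      rw [hA, ← hF y, Finset.sum_div]
      refine Finset.sum_congr rfl fun x hx => ?_
      have hfx := (hfpos x hx).ne'
      field_simp
    have hlog : Real.log (Q y) - Real.log (P y) = Real.log A := by
      rw [hA, Real.log_div hQy.ne' hPy.ne']
    rw [hlog]
    have key : ∑ x ∈ S, (f x * C x y / P y) * (1 - (g x / f x) / A)
        ≤ ∑ x ∈ S, (f x * C x y / P y) * (Real.log A - Real.log (g x / f x)) := by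
      refine Finset.sum_le_sum fun x hx => ?_
      have hw : 0 ≤ f x * C x y / P y := div_nonneg
        (mul_nonneg (hf x) (hC x y)) hPy.le
      refine mul_le_mul_of_nonneg_left ?_ hw
      have hr : 0 < g x / f x := div_pos ((hmemS x).mp hx) (hfpos x hx)
      have := log_div_ge' hApos hr
      rw [Real.log_div hApos.ne' hr.ne'] at this
      linarith
    have lhs_eq : ∑ x ∈ S, (f x * C x y / P y) * (1 - (g x / f x) / A) = 0 := by
      have : ∑ x ∈ S, (f x * C x y / P y) * (1 - (g x / f x) / A)
          = (∑ x ∈ S, f x * C x y / P y)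
            - (∑ x ∈ S, (f x * C x y / P y) * (g x / f x)) / A := by
        rw [Finset.sum_div, ← Finset.sum_sub_distrib]
        refine Finset.sum_congr rfl fun x hx => ?_
        ring
      rw [this, hw1, hwr, div_self hApos.ne']
      ring
    have rhs_eq : ∑ x ∈ S, (f x * C x y / P y) * (Real.log A - Real.log (g x / f x))
        = Real.log A - ∑ x ∈ S, (f x * C x y / P y) * Real.log (g x / f x) := by
      have : ∑ x ∈ S, (f x * C x y / P y) * (Real.log A - Real.log (g x / f x))
          = (∑ x ∈ S, f x * C x y / P y) * Real.log A
            - ∑ x ∈ S, (f x * C x y / P y) * Real.log (g x / f x) := by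
        rw [Finset.sum_mul, ← Finset.sum_sub_distrib]
        refine Finset.sum_congr rfl fun x hx => ?_
        ring
      rw [this, hw1, one_mul]
    rw [lhs_eq, rhs_eq] at key
    linarith
  -- the key inequality
  have key : 0 ≤ ∑ y, τ y * (Real.log (Q y) - Real.log (P y)) := by
    have step1 : ∑ y, τ y * ∑ x ∈ S, (f x * C x y / P y) * Real.log (g x / f x)
        ≤ ∑ y, τ y * (Real.log (Q y) - Real.log (P y)) := by
      refine Finset.sum_le_sum fun y _ => ?_
      rcases (hτ y).eq_or_lt with h | h
      · rw [← h]; simp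
      · exact mul_le_mul_of_nonneg_left (hH y h) (hτ y)
    have step2 : ∑ y, τ y * ∑ x ∈ S, (f x * C x y / P y) * Real.log (g x / f x)
        = ∑ x ∈ S, g x * Real.log (g x / f x) := by
      calc ∑ y, τ y * ∑ x ∈ S, (f x * C x y / P y) * Real.log (g x / f x)
          = ∑ y, ∑ x ∈ S, (τ y * (f x * C x y / P y)) * Real.log (g x / f x) := by
            refine Finset.sum_congr rfl fun y _ => ?_
            rw [Finset.mul_sum]
            refine Finset.sum_congr rfl fun x _ => ?_
            ring
        _ = ∑ x ∈ S, ∑ y, (τ y * (f x * C x y / P y)) * Real.log (g x / f x) :=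
            Finset.sum_comm
        _ = ∑ x ∈ S, g x * Real.log (g x / f x) := by
            refine Finset.sum_congr rfl fun x _ => ?_
            rw [← Finset.sum_mul, ← hrec]
    have step3 : ∑ x ∈ S, (g x - f x) ≤ ∑ x ∈ S, g x * Real.log (g x / f x) := by
      refine Finset.sum_le_sum fun x hx => ?_
      have hgx : 0 < g x := (hmemS x).mp hx
      have hfx : 0 < f x := hfpos x hx
      have := log_div_ge' hgx hfx
      have h2 : g x * (1 - f x / g x) ≤ g x * Real.log (g x / f x) :=
        mul_le_mul_of_nonneg_left this hgx.le
      have h3 : g x * (1 - f x / g x) = g x - f x := by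
        field_simp
      linarith
    have step4 : 0 ≤ ∑ x ∈ S, (g x - f x) := by
      rw [Finset.sum_sub_distrib, hG]
      have : ∑ x ∈ S, f x ≤ ∑ x, f x :=
        Finset.sum_le_sum_of_subset_of_nonneg (Finset.subset_univ S)
          (fun x _ _ => hf x)
      rw [hf1] at this
      linarith
    linarith
  -- conclude
  rw [← sub_nonneg, ← Finset.sum_sub_distrib]
  have : ∑ y, (τ y * Real.log (τ y / P y) - τ y * Real.log (τ y / Q y))
      = ∑ y, τ y * (Real.log (Q y) - Real.log (P y)) := by
    refine Finset.sum_congr rfl fun y _ => ?_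
    rcases (hτ y).eq_or_lt with h | h
    · rw [← h]; ring
    · rw [Real.log_div h.ne' (hp y h).ne', Real.log_div h.ne' (hq y h).ne']
      ring
  rw [this]
  exact key

private lemma kl_nonneg {X Y : Type} [Fintype X] [Fintype Y]
    (C : X → Y → ℝ) (hC : ∀ x y, 0 ≤ C x y) (hCrow : ∀ x, ∑ y, C x y = 1)
    (τ : Y → ℝ) (hτ : ∀ y, 0 ≤ τ y) (hτ1 : ∑ y, τ y = 1)
    (f : X → ℝ) (hf : ∀ x, 0 ≤ f x) (hf1 : ∑ x, f x = 1)
    (hp : ∀ y, 0 < τ y → 0 < ∑ x, f x * C x y) :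
    0 ≤ ∑ y, τ y * Real.log (τ y / (∑ x, f x * C x y)) := by
  set P : Y → ℝ := fun y => ∑ x, f x * C x y with hP
  have hPnn : ∀ y, 0 ≤ P y := fun y => Finset.sum_nonneg fun x _ =>
    mul_nonneg (hf x) (hC x y)
  have h1 : ∑ y, (τ y - P y) ≤ ∑ y, τ y * Real.log (τ y / P y) := by
    refine Finset.sum_le_sum fun y _ => ?_
    rcases (hτ y).eq_or_lt with h | h
    · rw [← h]
      simp [hPnn y]
    · have := log_div_ge' h (hp y h)
      have h2 := mul_le_mul_of_nonneg_left this (hτ y)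
      have h3 : τ y * (1 - P y / τ y) = τ y - P y := by
        field_simp
      linarith
  have h2 : ∑ y, (τ y - P y) = 0 := by
    rw [Finset.sum_sub_distrib, hτ1]
    have : ∑ y, P y = 1 := by
      calc ∑ y, P y = ∑ y, ∑ x, f x * C x y := rfl
        _ = ∑ x, ∑ y, f x * C x y := Finset.sum_comm
        _ = ∑ x, f x * ∑ y, C x y := by
            refine Finset.sum_congr rfl fun x _ => ?_
            rw [Finset.mul_sum]
        _ = ∑ x, f x := by
            refine Finset.sum_congr rfl fun x _ => ?_
            rw [hCrow x, mul_one]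
        _ = 1 := hf1
    rw [this]
    ring
  linarith

theorem jeffrey_sequence_kl_antitone
    {X Y : Type} [Fintype X] [Fintype Y]
    (C : X → Y → ℝ) (hC : ∀ x y, 0 ≤ C x y) (hCrow : ∀ x, ∑ y, C x y = 1)
    (τ : Y → ℝ) (hτ : ∀ y, 0 ≤ τ y) (hτ1 : ∑ y, τ y = 1)
    (θ : ℕ → X → ℝ)
    (hθ0 : ∀ x, 0 ≤ θ 0 x) (hθ01 : ∑ x, θ 0 x = 1)
    (hrec : ∀ t x, θ (t + 1) x
      = ∑ y, τ y * (θ t x * C x y / (∑ x', θ t x' * C x' y)))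
    (hpos : ∀ t y, 0 < τ y → 0 < ∑ x, θ t x * C x y) :
    Antitone (fun t => ∑ y, τ y * Real.log (τ y / (∑ x, θ t x * C x y)))
    ∧ ∃ l, Tendsto (fun t => ∑ y, τ y * Real.log (τ y / (∑ x, θ t x * C x y)))
        atTop (nhds l) := by
  have hinv : ∀ t, (∀ x, 0 ≤ θ t x) ∧ (∑ x, θ t x = 1) := by
    intro t
    induction t with
    | zero => exact ⟨hθ0, hθ01⟩
    | succ n ih =>
      constructor
      · intro x
        rw [hrec]
        exact Finset.sum_nonneg fun y _ => mul_nonneg (hτ y) (div_nonneg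
          (mul_nonneg (ih.1 x) (hC x y)) (Finset.sum_nonneg fun x' _ =>
            mul_nonneg (ih.1 x') (hC x' y)))
      · exact jeffrey_sum_one C τ hτ hτ1 (θ n) (θ (n + 1)) (hrec n) (hpos n)
  have hA : Antitone (fun t => ∑ y, τ y * Real.log (τ y / (∑ x, θ t x * C x y))) := by
    refine antitone_nat_of_succ_le fun t => ?_
    exact jeffrey_step C hC τ hτ hτ1 (θ t) (θ (t + 1)) (hinv t).1 (hinv t).2
      (hrec t) (hpos t) (hpos (t + 1))
  refine ⟨hA, ?_⟩
  have hbdd : BddBelow (Set.range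
      (fun t => ∑ y, τ y * Real.log (τ y / (∑ x, θ t x * C x y)))) := by
    refine ⟨0, ?_⟩
    rintro z ⟨t, rfl⟩
    exact kl_nonneg C hC hCrow τ hτ hτ1 (θ t) (hinv t).1 (hinv t).2 (hpos t)
  exact ⟨_, tendsto_atTop_ciInf hA hbdd⟩
end
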